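/- arXiv:1310.4555 — 2 statements merged into one kernel-verified Lean document; each statement's English description precedes it below -/
import Mathlib

section
/- For the particle interaction system where the probability of selecting the pair (k,l) is proportional to 1/(x_k x_l)^α and updated states are drawn uniformly and independently from (0,1), the distribution π_Γ ∝ (x_1 ⋯ x_N)^α · ∑_{i,j} 1/(x_i x_j)^α satisfies the detailed balance condition π_Γ P(Γ'|Γ) = π_{Γ'} P(Γ|Γ') for any two configurations Γ, Γ' differing only in coordinates k and l. -/
/-!
The selection rate of the pair `(k, l)` is `(x_k x_l)^(-α)`, and the normalising sum `∑_{i ≠ j}` of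
`π_Γ` cancels the one in the transition probability. What remains of `π_Γ P(Γ'|Γ)` is
`∏_{i ∉ {k, l}} x_i^α / Z`, which only involves the coordinates that `Γ` and `Γ'` share.
-/

open Finset

variable {ι : Type*} [Fintype ι] [DecidableEq ι]

lemma sum_sum_sdiff_singleton_mul_rpow_neg_pos {z : ι → ℝ} (hz : ∀ i, 0 < z i) (α : ℝ)
    {k l : ι} (hkl : k ≠ l) :
    0 < ∑ i, ∑ j ∈ univ \ {i}, (z i * z j) ^ (-α) := by
  have hnonneg (i j : ι) : 0 ≤ (z i * z j) ^ (-α) :=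
    Real.rpow_nonneg (mul_pos (hz i) (hz j)).le _
  refine sum_pos' (fun i _ => sum_nonneg fun j _ => hnonneg i j) ⟨k, mem_univ k, ?_⟩
  exact sum_pos' (fun j _ => hnonneg k j)
    ⟨l, by simp [hkl.symm], Real.rpow_pos_of_pos (mul_pos (hz k) (hz l)) _⟩

lemma prod_rpow_mul_mul_rpow_neg {z : ι → ℝ} (hz : ∀ i, 0 < z i) (α : ℝ) {k l : ι}
    (hkl : k ≠ l) :
    (∏ i, z i ^ α) * (z k * z l) ^ (-α) = ∏ i ∈ univ \ {k, l}, z i ^ α := by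
  have hl : l ∈ univ \ {k} := by simp [hkl.symm]
  have hcompl : (univ \ {k}) \ {l} = univ \ ({k, l} : Finset ι) := by ext; simp
  rw [prod_eq_prod_sdiff_singleton_mul (mem_univ k), prod_eq_prod_sdiff_singleton_mul hl, hcompl,
    Real.mul_rpow (hz k).le (hz l).le, Real.rpow_neg (hz k).le, Real.rpow_neg (hz l).le]
  have hk' : z k ^ α ≠ 0 := (Real.rpow_pos_of_pos (hz k) α).ne'
  have hl' : z l ^ α ≠ 0 := (Real.rpow_pos_of_pos (hz l) α).ne'
  field_simp

theorem stmt_9_general (N : ℕ) (α Z : ℝ)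
    (x y : Fin N → ℝ)
    (hx : ∀ i, x i ∈ Set.Ioo (0 : ℝ) 1) (hy : ∀ i, y i ∈ Set.Ioo (0 : ℝ) 1)
    (k l : Fin N) (hkl : k ≠ l)
    (hagree : ∀ i, i ≠ k → i ≠ l → x i = y i) :
    ((∏ i, x i ^ α) * (∑ i, ∑ j ∈ univ \ {i}, (x i * x j) ^ (-α)) / Z) *
        ((x k * x l) ^ (-α) / (∑ i, ∑ j ∈ univ \ {i}, (x i * x j) ^ (-α)))
      = ((∏ i, y i ^ α) * (∑ i, ∑ j ∈ univ \ {i}, (y i * y j) ^ (-α)) / Z) *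
        ((y k * y l) ^ (-α) / (∑ i, ∑ j ∈ univ \ {i}, (y i * y j) ^ (-α))) := by
  have hxpos i : 0 < x i := (hx i).1
  have hypos i : 0 < y i := (hy i).1
  have hSx := sum_sum_sdiff_singleton_mul_rpow_neg_pos hxpos α hkl
  have hSy := sum_sum_sdiff_singleton_mul_rpow_neg_pos hypos α hkl
  have hweight : (∏ i, x i ^ α) * (x k * x l) ^ (-α) = (∏ i, y i ^ α) * (y k * y l) ^ (-α) := by
    rw [prod_rpow_mul_mul_rpow_neg hxpos α hkl, prod_rpow_mul_mul_rpow_neg hypos α hkl]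
    refine prod_congr rfl fun i hi => ?_
    simp only [mem_sdiff, mem_univ, mem_insert, mem_singleton, not_or, true_and] at hi
    rw [hagree i hi.1 hi.2]
  rw [mul_div_right_comm, mul_assoc, mul_div_cancel₀ _ hSx.ne', mul_div_right_comm _ _ Z,
    mul_assoc, mul_div_cancel₀ _ hSy.ne', div_mul_eq_mul_div, div_mul_eq_mul_div, hweight]

/-- Detailed balance for the particle interaction system. -/
theorem stmt_9 (N : ℕ) (α Z : ℝ) (hα : 0 < α) (hα1 : α < 1) (hZ : 0 < Z)
    (x y : Fin N → ℝ)
    (hx : ∀ i, x i ∈ Set.Ioo (0 : ℝ) 1) (hy : ∀ i, y i ∈ Set.Ioo (0 : ℝ) 1)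
    (k l : Fin N) (hkl : k ≠ l)
    (hagree : ∀ i, i ≠ k → i ≠ l → x i = y i) :
    ((∏ i, x i ^ α) * (∑ i, ∑ j ∈ univ \ {i}, (x i * x j) ^ (-α)) / Z) *
        ((x k * x l) ^ (-α) / (∑ i, ∑ j ∈ univ \ {i}, (x i * x j) ^ (-α)))
      = ((∏ i, y i ^ α) * (∑ i, ∑ j ∈ univ \ {i}, (y i * y j) ^ (-α)) / Z) *
        ((y k * y l) ^ (-α) / (∑ i, ∑ j ∈ univ \ {i}, (y i * y j) ^ (-α))) :=
  stmt_9_general N α Z x y hx hy k l hkl hagree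
end

section
/- For g(x_1,…,x_N) = x_1² + ⋯ + x_N², the expectation under the stationary distribution π equals E[g] = ((α+1)/(α+3))·(N−2) + 2/3. -/
open MeasureTheory Finset

/-!
For a pair `i < j`, on the open unit cube `(∏ k, x k ^ α) * (x i * x j) ^ (-α)` is the monomial
`∏ k, x k ^ b k` with `b = 0` on `{i, j}` and `b = α` elsewhere. By Fubini, integrating such a
monomial over the cube gives `∏ k, (b k + 1)⁻¹`, and multiplying it by `x m ^ 2` multiplies the
integral by `(b m + 1) / (b m + 3)`. Hence each pair contributes
`(α + 1)⁻¹ ^ (N - 2) * (2 / 3 + (N - 2) * (α + 1) / (α + 3))`, and the `N.choose 2` equal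
contributions cancel against the normalising constant.
-/

lemma integral_Ioo_zero_one_rpow {r : ℝ} (hr : -1 < r) :
    ∫ t in Set.Ioo (0 : ℝ) 1, t ^ r = (r + 1)⁻¹ := by
  rw [← integral_Ioc_eq_integral_Ioo, ← intervalIntegral.integral_of_le zero_le_one,
    integral_rpow (Or.inl hr), Real.one_rpow, Real.zero_rpow (by linarith)]
  ring

lemma sum_sum_filter_lt_const {α M : Type*} [Fintype α] [LinearOrder α] [AddCommMonoid M]
    (c : M) : ∑ i : α, ∑ _j ∈ univ.filter (i < ·), c = (Fintype.card α).choose 2 • c := by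
  rw [← Fintype.card_product_filter_lt, ← sum_const, sum_filter, Fintype.sum_prod_type]
  simp only [sum_filter]

lemma neg_one_lt_add_single_two {ι : Type*} [DecidableEq ι] {b : ι → ℝ} (hb : ∀ k, -1 < b k)
    (m k : ι) : -1 < (b + Pi.single m 2 : ι → ℝ) k :=
  have h2 : (0 : ι → ℝ) ≤ Pi.single m 2 := Pi.single_nonneg.2 zero_le_two
  (hb k).trans_le (le_add_of_nonneg_right (h2 k))

section UnitCube

variable {ι : Type*} [Fintype ι] {b : ι → ℝ}

lemma integrableOn_unitCube_prod_rpow (hb : ∀ k, -1 < b k) :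
    IntegrableOn (fun x : ι → ℝ => ∏ k, x k ^ b k) (Set.univ.pi fun _ => Set.Ioo 0 1) := by
  rw [IntegrableOn, volume_pi, Measure.restrict_pi_pi]
  exact Integrable.fintype_prod (f := fun k t => t ^ b k)
    fun k => (intervalIntegral.integrableOn_Ioo_rpow_iff zero_lt_one).2 (hb k)

lemma integral_unitCube_prod_rpow (hb : ∀ k, -1 < b k) :
    ∫ x in Set.univ.pi (fun _ : ι => Set.Ioo (0 : ℝ) 1), ∏ k, x k ^ b k = ∏ k, (b k + 1)⁻¹ := by
  rw [volume_pi, Measure.restrict_pi_pi, integral_fintype_prod_eq_prod fun k (t : ℝ) => t ^ b k]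
  exact prod_congr rfl fun k _ => integral_Ioo_zero_one_rpow (hb k)

variable [DecidableEq ι]

lemma sq_mul_prod_rpow {x : ι → ℝ} (hx : ∀ k, 0 < x k) (b : ι → ℝ) (m : ι) :
    x m ^ 2 * ∏ k, x k ^ b k = ∏ k, x k ^ (b + Pi.single m 2 : ι → ℝ) k := by
  have hsingle : ∏ k, x k ^ (Pi.single m (2 : ℝ) : ι → ℝ) k = x m ^ 2 := by
    rw [Fintype.prod_eq_single m fun k hk => by simp [Pi.single_eq_of_ne hk]]
    simp
  simp only [Pi.add_apply, Real.rpow_add (hx _), prod_mul_distrib, hsingle, mul_comm]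

lemma integrableOn_unitCube_sq_mul_prod_rpow (hb : ∀ k, -1 < b k) (m : ι) :
    IntegrableOn (fun x : ι → ℝ => x m ^ 2 * ∏ k, x k ^ b k)
      (Set.univ.pi fun _ => Set.Ioo 0 1) :=
  (integrableOn_unitCube_prod_rpow (neg_one_lt_add_single_two hb m)).congr_fun
    (fun _ hx => (sq_mul_prod_rpow (fun k => (hx k trivial).1) b m).symm)
    (MeasurableSet.univ_pi fun _ => measurableSet_Ioo)

lemma integral_unitCube_sq_mul_prod_rpow (hb : ∀ k, -1 < b k) (m : ι) :
    ∫ x in Set.univ.pi (fun _ : ι => Set.Ioo (0 : ℝ) 1), x m ^ 2 * ∏ k, x k ^ b k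
      = (b m + 1) / (b m + 3) * ∏ k, (b k + 1)⁻¹ := by
  rw [setIntegral_congr_fun (MeasurableSet.univ_pi fun _ => measurableSet_Ioo)
    (fun x hx => sq_mul_prod_rpow (fun k => (hx k trivial).1) b m),
    integral_unitCube_prod_rpow (neg_one_lt_add_single_two hb m),
    Fintype.prod_eq_mul_prod_compl m, Fintype.prod_eq_mul_prod_compl m fun k => (b k + 1)⁻¹,
    prod_congr rfl fun k hk => by
      rw [Pi.add_apply, Pi.single_eq_of_ne (by simpa using hk), add_zero],
    Pi.add_apply, Pi.single_eq_same, add_assoc, two_add_one_eq_three]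
  have : b m + 1 ≠ 0 := by linarith [hb m]
  have : b m + 3 ≠ 0 := by linarith [hb m]
  field_simp

lemma integrableOn_unitCube_sum_sq_mul_prod_rpow (hb : ∀ k, -1 < b k) :
    IntegrableOn (fun x : ι → ℝ => (∑ m, x m ^ 2) * ∏ k, x k ^ b k)
      (Set.univ.pi fun _ => Set.Ioo 0 1) := by
  simp_rw [sum_mul]
  exact integrable_finsetSum _ fun m _ => integrableOn_unitCube_sq_mul_prod_rpow hb m

lemma integral_unitCube_sum_sq_mul_prod_rpow (hb : ∀ k, -1 < b k) :
    ∫ x in Set.univ.pi (fun _ : ι => Set.Ioo (0 : ℝ) 1), (∑ m, x m ^ 2) * ∏ k, x k ^ b k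
      = (∑ m, (b m + 1) / (b m + 3)) * ∏ k, (b k + 1)⁻¹ := by
  simp_rw [sum_mul]
  rw [integral_finsetSum _ fun m _ => integrableOn_unitCube_sq_mul_prod_rpow hb m]
  exact sum_congr rfl fun m _ => integral_unitCube_sq_mul_prod_rpow hb m

end UnitCube

section PairWeights

variable {ι : Type*} [Fintype ι] [DecidableEq ι]

lemma prod_rpow_mul_mul_rpow_neg_s12 {x : ι → ℝ} (hx : ∀ k, 0 < x k) {i j : ι} (hij : i ≠ j)
    (a : ℝ) :
    (∏ k, x k ^ a) * (x i * x j) ^ (-a)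
      = ∏ k, x k ^ (if k ∈ ({i, j} : Finset ι) then 0 else a) := by
  have hcompl : ∏ k ∈ {i, j}ᶜ, x k ^ (if k ∈ ({i, j} : Finset ι) then 0 else a)
      = ∏ k ∈ {i, j}ᶜ, x k ^ a :=
    prod_congr rfl fun k hk => by rw [if_neg (mem_compl.1 hk)]
  rw [← prod_mul_prod_compl {i, j}, ← prod_mul_prod_compl {i, j} fun k => x k ^ ite _ _ _,
    hcompl, prod_pair hij, prod_pair hij, Real.mul_rpow (hx i).le (hx j).le,
    Real.rpow_neg (hx i).le, Real.rpow_neg (hx j).le]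
  have hi : x i ^ a ≠ 0 := (Real.rpow_pos_of_pos (hx i) a).ne'
  have hj : x j ^ a ≠ 0 := (Real.rpow_pos_of_pos (hx j) a).ne'
  simp only [mem_insert, mem_singleton, true_or, or_true, if_true, Real.rpow_zero, one_mul]
  field_simp

lemma prod_ite_add_one_inv (P : Finset ι) (a : ℝ) :
    ∏ k, ((if k ∈ P then 0 else a) + 1)⁻¹ = (a + 1)⁻¹ ^ #Pᶜ := by
  rw [prod_apply_ite (h := fun b : ℝ => (b + 1)⁻¹)]
  simp [filter_not, compl_eq_univ_sdiff]

lemma sum_ite_add_one_div_add_three (P : Finset ι) (a : ℝ) :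
    ∑ m, ((if m ∈ P then 0 else a) + 1) / ((if m ∈ P then 0 else a) + 3)
      = #P / 3 + #Pᶜ * ((a + 1) / (a + 3)) := by
  rw [sum_apply_ite (h := fun b : ℝ => (b + 1) / (b + 3))]
  simp [filter_not, compl_eq_univ_sdiff, div_eq_mul_inv]

end PairWeights

theorem stmt_12_general (N : ℕ) (hN : 2 ≤ N) (α : ℝ) (hα : 0 < α) :
    ((α + 1) ^ (N - 2) / (N.choose 2 : ℝ)) *
        ∫ x in Set.univ.pi (fun _ : Fin N => Set.Ioo (0 : ℝ) 1),
          (∑ m, x m ^ 2) * ((∏ i, x i ^ α) *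
            (∑ i, ∑ j ∈ univ.filter (fun j => i < j), (x i * x j) ^ (-α)))
      = ((α + 1) / (α + 3)) * ((N : ℝ) - 2) + 2 / 3 := by
  set b : Fin N → Fin N → Fin N → ℝ := fun i j k => if k ∈ ({i, j} : Finset _) then 0 else α
  have hb : ∀ i j k, -1 < b i j k := fun i j k => by
    simp only [b]; split_ifs <;> linarith
  have hcube : Set.EqOn
      (fun x : Fin N → ℝ => (∑ m, x m ^ 2) * ((∏ i, x i ^ α) *
        (∑ i, ∑ j ∈ univ.filter (fun j => i < j), (x i * x j) ^ (-α))))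
      (fun x => ∑ i, ∑ j ∈ univ.filter (fun j => i < j), (∑ m, x m ^ 2) * ∏ k, x k ^ b i j k)
      (Set.univ.pi fun _ => Set.Ioo 0 1) := fun x hx => by
    simp only [mul_sum]
    refine sum_congr rfl fun i _ => sum_congr rfl fun j hj => ?_
    rw [prod_rpow_mul_mul_rpow_neg_s12 (fun k => (hx k trivial).1) (mem_filter.1 hj).2.ne]
  have hpair : ∀ i, ∀ j ∈ univ.filter (fun j => i < j),
      ∫ x in Set.univ.pi (fun _ : Fin N => Set.Ioo (0 : ℝ) 1),
        (∑ m, x m ^ 2) * ∏ k, x k ^ b i j k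
        = (2 / 3 + ((N : ℝ) - 2) * ((α + 1) / (α + 3))) * (α + 1)⁻¹ ^ (N - 2) := by
    intro i j hj
    rw [integral_unitCube_sum_sq_mul_prod_rpow (hb i j), sum_ite_add_one_div_add_three,
      prod_ite_add_one_inv, card_compl, card_pair (mem_filter.1 hj).2.ne, Fintype.card_fin,
      Nat.cast_sub hN, Nat.cast_two]
  rw [setIntegral_congr_fun (MeasurableSet.univ_pi fun _ => measurableSet_Ioo) hcube,
    integral_finsetSum _ fun i _ => integrable_finsetSum _ fun j _ =>
      integrableOn_unitCube_sum_sq_mul_prod_rpow (hb i j),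
    sum_congr rfl fun i _ => (integral_finsetSum _ fun j _ =>
      integrableOn_unitCube_sum_sq_mul_prod_rpow (hb i j)).trans (sum_congr rfl (hpair i)),
    sum_sum_filter_lt_const, Fintype.card_fin, nsmul_eq_mul, inv_pow]
  have hchoose : (N.choose 2 : ℝ) ≠ 0 := by exact_mod_cast (Nat.choose_pos hN).ne'
  have : α + 1 ≠ 0 := by linarith
  have : α + 3 ≠ 0 := by linarith
  field_simp
  ring

/-- E[x_1² + ⋯ + x_N²] = ((α+1)/(α+3))(N−2) + 2/3 under the stationary distribution. -/
theorem stmt_12 (N : ℕ) (hN : 2 ≤ N) (α : ℝ) (hα : 0 < α) (hα1 : α < 1) :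
    ((α + 1) ^ (N - 2) / (N.choose 2 : ℝ)) *
        ∫ x in Set.univ.pi (fun _ : Fin N => Set.Ioo (0 : ℝ) 1),
          (∑ m, x m ^ 2) * ((∏ i, x i ^ α) *
            (∑ i, ∑ j ∈ univ.filter (fun j => i < j), (x i * x j) ^ (-α)))
      = ((α + 1) / (α + 3)) * ((N : ℝ) - 2) + 2 / 3 :=
  stmt_12_general N hN α hα
end
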